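/- Let Σ be a symmetric positive definite k × k matrix, m ∈ ℝ^k, and c ∈ ℝ^k. Let f_U^{(m,Σ)} denote the lognormal density with parameters (m, Σ) and let μ_H be the probability measure on ℝ^k given by μ_H(A) = (1/Z_m) ∫_A f_U^{(m,Σ)}(h) 1_{ℍ_1}(h) dτ_1(h) with Z_m = ∫ f_U^{(m,Σ)} 1_{ℍ_1} dτ_1 (the prior law of the steps heights). Then the posterior measure A ↦ ( ∫_A (∏_{i=1}^k h_i^{c_i}) dμ_H(h) ) / ( ∫_{ℝ^k} (∏_{i=1}^k h_i^{c_i}) dμ_H(h) ) equals the probability measure A ↦ (1/Z_{m*}) ∫_A f_U^{(m*,Σ)}(h) 1_{ℍ_1}(h) dτ_1(h) with m* = m + Σc, i.e. the prior family Δ(m,Σ) is closed under sampling with updated location m* = m + Σc. -/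

import Mathlib

open MeasureTheory ENNReal Set Matrix

noncomputable section

def stepLen {k : ℕ} (t : Fin (k + 1) → ℝ) (i : Fin k) : ℝ :=
  t i.succ - t i.castSucc

def Sdelta {k : ℕ} (t : Fin (k + 1) → ℝ) (u : Fin k → ℝ) : ℝ :=
  ∑ i, stepLen t i * u i

def Hset {k : ℕ} (t : Fin (k + 1) → ℝ) (r : ℝ) : Set (Fin k → ℝ) :=
  {v | (∀ i, 0 < v i) ∧ Sdelta t v = r}

def posOrthant (k : ℕ) : Set (Fin k → ℝ) :=
  {v | ∀ i, 0 < v i}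

def projFirst {k : ℕ} (v : Fin k → ℝ) (i : Fin (k - 1)) : ℝ :=
  v (Fin.castLE (Nat.sub_le k 1) i)

def dLast {k : ℕ} (hk : 0 < k) (t : Fin (k + 1) → ℝ) : ℝ :=
  stepLen t ⟨k - 1, Nat.sub_lt hk one_pos⟩

/-- The lognormal density `f_U` of `U ~ L_k(m, Σ)` with respect to `λ_k`:
`f_U(u) = (2π)^{-k/2} |Σ|^{-1/2} (∏ u_i⁻¹) exp(-½ (log u - m)ᵀ Sig⁻¹ (log u - m)) 1_{ℝ^k_+}(u)`. -/
def logNormalDensity {k : ℕ} (m : Fin k → ℝ) (Sig : Matrix (Fin k) (Fin k) ℝ)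
    (u : Fin k → ℝ) : ℝ :=
  (posOrthant k).indicator
    (fun u =>
      (2 * Real.pi) ^ (-(k : ℝ) / 2) * Sig.det ^ (-(1 : ℝ) / 2) * (∏ i, (u i)⁻¹) *
        Real.exp (-(1 / 2) *
          (((fun i => Real.log (u i)) - m) ⬝ᵥ (Sig⁻¹ *ᵥ ((fun i => Real.log (u i)) - m))))) u


/-- The normalizing constant `Z_m = ∫ f_U^{(m,Σ)} 1_{ℍ_1} dτ_1`. -/
def heightsNormalizer {k : ℕ} (t : Fin (k + 1) → ℝ) (m : Fin k → ℝ)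
    (Sig : Matrix (Fin k) (Fin k) ℝ) (τ1 : Measure (Fin k → ℝ)) : ℝ≥0∞ :=
  ∫⁻ h, ENNReal.ofReal (logNormalDensity m Sig h) * (Hset t 1).indicator 1 h ∂τ1

/-- The prior law `μ_H(A) = Z_m⁻¹ ∫_A f_U^{(m,Σ)} 1_{ℍ_1} dτ_1` of the steps heights. -/
def heightsPrior {k : ℕ} (t : Fin (k + 1) → ℝ) (m : Fin k → ℝ)
    (Sig : Matrix (Fin k) (Fin k) ℝ) (τ1 : Measure (Fin k → ℝ)) : Measure (Fin k → ℝ) :=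
  (heightsNormalizer t m Sig τ1)⁻¹ •
    τ1.withDensity fun h => ENNReal.ofReal (logNormalDensity m Sig h) * (Hset t 1).indicator 1 h

/-!
Writing `∏ hᵢ^{cᵢ} = exp (c ⬝ᵥ log h)` and completing the square in the Gaussian exponent gives,
pointwise in `h`, `f^{(m,Σ)}(h) ∏ hᵢ^{cᵢ} = exp (c ⬝ᵥ m + ½ cᵀΣc) · f^{(m+Σc,Σ)}(h)`. Hence the
posterior has density proportional to `f^{(m+Σc,Σ)} 1_{ℍ_1}` with respect to `τ₁`, and the
constant `exp (c ⬝ᵥ m + ½ cᵀΣc)` cancels between numerator and denominator.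
-/

lemma measurableSet_posOrthant (k : ℕ) : MeasurableSet (posOrthant k) := by
  have : posOrthant k = ⋂ i, {v : Fin k → ℝ | 0 < v i} := by ext v; simp [posOrthant]
  rw [this]
  exact .iInter fun i => measurableSet_lt measurable_const (measurable_pi_apply i)

lemma measurable_sdelta {k : ℕ} (t : Fin (k + 1) → ℝ) : Measurable (Sdelta t) :=
  Finset.measurable_sum _ fun i _ => (measurable_pi_apply i).const_mul _

lemma measurableSet_hset {k : ℕ} (t : Fin (k + 1) → ℝ) (r : ℝ) :
    MeasurableSet (Hset t r) := by
  have : Hset t r = posOrthant k ∩ Sdelta t ⁻¹' {r} := rfl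
  rw [this]
  exact (measurableSet_posOrthant k).inter (measurable_sdelta t (measurableSet_singleton r))

lemma measurable_logNormalDensity {k : ℕ} (m : Fin k → ℝ) (Sig : Matrix (Fin k) (Fin k) ℝ) :
    Measurable (logNormalDensity m Sig) := by
  have hlog : Measurable fun u : Fin k → ℝ => (fun i => Real.log (u i)) - m :=
    (measurable_pi_lambda _ fun i => Real.measurable_log.comp (measurable_pi_apply i)).sub_const m
  have hquad : Measurable fun u : Fin k → ℝ =>
      ((fun i => Real.log (u i)) - m) ⬝ᵥ (Sig⁻¹ *ᵥ ((fun i => Real.log (u i)) - m)) :=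
    (continuous_id.dotProduct (continuous_const.matrix_mulVec continuous_id)).measurable.comp hlog
  refine Measurable.indicator ?_ (measurableSet_posOrthant k)
  exact (measurable_const.mul (Finset.measurable_prod _ fun i _ => (measurable_pi_apply i).inv)).mul
    (hquad.const_mul _).exp

lemma logNormalDensity_nonneg {k : ℕ} (m : Fin k → ℝ) {Sig : Matrix (Fin k) (Fin k) ℝ}
    (hdet : 0 ≤ Sig.det) (u : Fin k → ℝ) : 0 ≤ logNormalDensity m Sig u := by
  refine Set.indicator_nonneg (fun u hu => ?_) u
  have hprod : 0 ≤ ∏ i, (u i)⁻¹ := Finset.prod_nonneg fun i _ => inv_nonneg.mpr (hu i).le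
  have := Real.rpow_nonneg (by positivity : (0 : ℝ) ≤ 2 * Real.pi) (-(k : ℝ) / 2)
  have := Real.rpow_nonneg hdet (-(1 : ℝ) / 2)
  positivity

lemma dotProduct_add_neg_half_quadForm_shift {n : Type*} [Fintype n] [DecidableEq n]
    {S : Matrix n n ℝ} (hS : S.IsSymm) (hdet : IsUnit S.det) (m c x : n → ℝ) :
    c ⬝ᵥ x + -(1 / 2) * ((x - m) ⬝ᵥ S⁻¹ *ᵥ (x - m)) =
      (c ⬝ᵥ m + 1 / 2 * (c ⬝ᵥ S *ᵥ c)) +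
        -(1 / 2) * ((x - (m + S *ᵥ c)) ⬝ᵥ S⁻¹ *ᵥ (x - (m + S *ᵥ c))) := by
  have hinv : S⁻¹ *ᵥ (S *ᵥ c) = c := by
    rw [mulVec_mulVec, nonsing_inv_mul _ hdet, one_mulVec]
  have hsymm : ∀ w, (S *ᵥ c) ⬝ᵥ (S⁻¹ *ᵥ w) = c ⬝ᵥ w := fun w => by
    rw [dotProduct_comm, dotProduct_mulVec, ← mulVec_transpose, hS.eq, mulVec_mulVec,
      mul_nonsing_inv _ hdet, one_mulVec, dotProduct_comm]
  have hshift : x - (m + S *ᵥ c) = (x - m) - S *ᵥ c := by abel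
  rw [hshift, mulVec_sub S⁻¹ (x - m), hinv, dotProduct_sub (x - m - S *ᵥ c),
    sub_dotProduct (x - m), sub_dotProduct (x - m), hsymm, dotProduct_comm (x - m) c,
    dotProduct_comm (S *ᵥ c) c]
  linear_combination (-1 : ℝ) * dotProduct_sub c x m

lemma prod_rpow_eq_exp_dotProduct_log {n : Type*} [Fintype n] (c h : n → ℝ)
    (hpos : ∀ i, 0 < h i) : ∏ i, h i ^ c i = Real.exp (c ⬝ᵥ fun i => Real.log (h i)) := by
  rw [dotProduct, Real.exp_sum]
  exact Finset.prod_congr rfl fun i _ => by rw [Real.rpow_def_of_pos (hpos i), mul_comm]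

lemma logNormalDensity_mul_prod_rpow {k : ℕ} {Sig : Matrix (Fin k) (Fin k) ℝ}
    (hS : Sig.IsSymm) (hdet : IsUnit Sig.det) (m c h : Fin k → ℝ) :
    logNormalDensity m Sig h * ∏ i, h i ^ c i =
      Real.exp (c ⬝ᵥ m + 1 / 2 * (c ⬝ᵥ Sig *ᵥ c)) * logNormalDensity (m + Sig *ᵥ c) Sig h := by
  by_cases hpos : h ∈ posOrthant k
  · simp only [logNormalDensity, Set.indicator_of_mem hpos]
    rw [prod_rpow_eq_exp_dotProduct_log c h hpos]
    have hexp := congrArg Real.exp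
      (dotProduct_add_neg_half_quadForm_shift hS hdet m c fun i => Real.log (h i))
    rw [Real.exp_add, Real.exp_add] at hexp
    linear_combination ((2 * Real.pi) ^ (-(k : ℝ) / 2) * Sig.det ^ (-(1 : ℝ) / 2) *
      ∏ i, (h i)⁻¹) * hexp
  · simp [logNormalDensity, Set.indicator_of_notMem hpos]

lemma setLIntegral_likelihood_heightsPrior {k : ℕ} (t : Fin (k + 1) → ℝ)
    {Sig : Matrix (Fin k) (Fin k) ℝ} (hS : Sig.IsSymm) (hdet : 0 < Sig.det)
    (m c : Fin k → ℝ) (τ1 : Measure (Fin k → ℝ)) {B : Set (Fin k → ℝ)} (hB : MeasurableSet B) :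
    ∫⁻ h in B, ENNReal.ofReal (∏ i, h i ^ c i) ∂(heightsPrior t m Sig τ1) =
      (heightsNormalizer t m Sig τ1)⁻¹ *
        (ENNReal.ofReal (Real.exp (c ⬝ᵥ m + 1 / 2 * (c ⬝ᵥ Sig *ᵥ c))) *
          ∫⁻ h in B, ENNReal.ofReal (logNormalDensity (m + Sig *ᵥ c) Sig h) *
            (Hset t 1).indicator 1 h ∂τ1) := by
  have hprior : Measurable fun h =>
      ENNReal.ofReal (logNormalDensity m Sig h) * (Hset t 1).indicator 1 h :=
    (measurable_logNormalDensity m Sig).ennreal_ofReal.mul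
      (measurable_const.indicator (measurableSet_hset t 1))
  have hlik : Measurable fun h : Fin k → ℝ => ENNReal.ofReal (∏ i, h i ^ c i) :=
    (Finset.measurable_prod _ fun i _ =>
      (measurable_pi_apply i).pow_const (c i)).ennreal_ofReal
  have hdensity : ∀ h, ENNReal.ofReal (logNormalDensity m Sig h) * (Hset t 1).indicator 1 h *
      ENNReal.ofReal (∏ i, h i ^ c i) =
        ENNReal.ofReal (Real.exp (c ⬝ᵥ m + 1 / 2 * (c ⬝ᵥ Sig *ᵥ c))) *
          (ENNReal.ofReal (logNormalDensity (m + Sig *ᵥ c) Sig h) * (Hset t 1).indicator 1 h) :=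
    fun h => by
      rw [mul_right_comm, ← ENNReal.ofReal_mul (logNormalDensity_nonneg m hdet.le h),
        logNormalDensity_mul_prod_rpow hS hdet.ne'.isUnit, ENNReal.ofReal_mul (Real.exp_pos _).le,
        mul_assoc]
  rw [heightsPrior, Measure.restrict_smul, lintegral_smul_measure, restrict_withDensity hB,
    lintegral_withDensity_eq_lintegral_mul _ hprior hlik, smul_eq_mul]
  simp only [Pi.mul_apply, hdensity]
  rw [lintegral_const_mul' _ _ ENNReal.ofReal_ne_top]

theorem simple_random_densities_stmt11_general
    (k : ℕ) (t : Fin (k + 1) → ℝ)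
    (Sig : Matrix (Fin k) (Fin k) ℝ) (hSig : Sig.PosDef)
    (m c : Fin k → ℝ) (τ1 : Measure (Fin k → ℝ))
    (hZ0 : heightsNormalizer t m Sig τ1 ≠ 0)
    (hZtop : heightsNormalizer t m Sig τ1 ≠ ⊤) :
    ∀ A : Set (Fin k → ℝ), MeasurableSet A →
      (∫⁻ h in A, ENNReal.ofReal (∏ i, h i ^ c i) ∂(heightsPrior t m Sig τ1)) /
          (∫⁻ h, ENNReal.ofReal (∏ i, h i ^ c i) ∂(heightsPrior t m Sig τ1)) =
        (heightsNormalizer t (m + Sig *ᵥ c) Sig τ1)⁻¹ *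
          ∫⁻ h in A,
            ENNReal.ofReal (logNormalDensity (m + Sig *ᵥ c) Sig h) *
              (Hset t 1).indicator 1 h ∂τ1 := by
  intro A hA
  have hS : Sig.IsSymm := isHermitian_iff_isSymm.mp hSig.isHermitian
  have hposterior := fun {B} (hB : MeasurableSet B) =>
    setLIntegral_likelihood_heightsPrior t hS hSig.det_pos m c τ1 hB
  have hK : ENNReal.ofReal (Real.exp (c ⬝ᵥ m + 1 / 2 * (c ⬝ᵥ Sig *ᵥ c))) ≠ 0 :=
    ENNReal.ofReal_ne_zero_iff.mpr (Real.exp_pos _)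
  have hnormalizing := hposterior MeasurableSet.univ
  rw [Measure.restrict_univ, Measure.restrict_univ] at hnormalizing
  rw [hposterior hA, hnormalizing, ← mul_assoc, ← mul_assoc, ENNReal.mul_div_mul_left _ _
      (mul_ne_zero (ENNReal.inv_ne_zero.mpr hZtop) hK)
      (ENNReal.mul_ne_top (ENNReal.inv_ne_top.mpr hZ0) ENNReal.ofReal_ne_top),
    ENNReal.div_eq_inv_mul]
  rfl

/-- the prior family `Δ(m,Σ)` is closed under sampling: the posterior measure
obtained from the prior `μ_H` and the likelihood `∏ h_i^{c_i}` is the measure of the same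
form with updated location `m* = m + Σc`. -/
theorem simple_random_densities_stmt11
    (k : ℕ) (hk : 0 < k) (t : Fin (k + 1) → ℝ) (ht : StrictMono t)
    (Sig : Matrix (Fin k) (Fin k) ℝ) (hSig : Sig.PosDef)
    (m c : Fin k → ℝ) (τ1 : Measure (Fin k → ℝ))
    (hτ1 : ∀ A : Set (Fin k → ℝ), MeasurableSet A →
      τ1 A = ENNReal.ofReal (dLast hk t)⁻¹ * volume (projFirst '' (A ∩ Hset t 1)))
    (hZ0 : heightsNormalizer t m Sig τ1 ≠ 0)
    (hZtop : heightsNormalizer t m Sig τ1 ≠ ⊤) :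
    ∀ A : Set (Fin k → ℝ), MeasurableSet A →
      (∫⁻ h in A, ENNReal.ofReal (∏ i, h i ^ c i) ∂(heightsPrior t m Sig τ1)) /
          (∫⁻ h, ENNReal.ofReal (∏ i, h i ^ c i) ∂(heightsPrior t m Sig τ1)) =
        (heightsNormalizer t (m + Sig *ᵥ c) Sig τ1)⁻¹ *
          ∫⁻ h in A,
            ENNReal.ofReal (logNormalDensity (m + Sig *ᵥ c) Sig h) *
              (Hset t 1).indicator 1 h ∂τ1 :=
  simple_random_densities_stmt11_general k t Sig hSig m c τ1 hZ0 hZtop
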